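/- arXiv:1412.4753 — 4 statements merged into one kernel-verified Lean document; each statement's English description precedes it below -/
import Mathlib

section
/- Let U, V be reflexive Banach spaces and B : U → V' a bounded bijective linear operator. With the optimal test norm ‖v‖_{V,opt} := sup_{0 ≠ u ∈ U} ⟨Bu, v⟩/‖u‖_U, one has the duality identity ‖u‖_U = sup_{0 ≠ v ∈ V} ⟨Bu, v⟩ / ‖v‖_{V,opt} for every u ∈ U. -/
/-! The map `v ↦ B(·) v` identifies `V` with `U'`: it is injective by Hahn–Banach because `B` is
onto `V'`, and surjective because a functional `f ∈ U'` gives `f ∘ B⁻¹ ∈ V''`, which comes from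
some `v ∈ V` by reflexivity of `V` (`B⁻¹` is bounded by the open mapping theorem). Under this
identification `‖v‖_{V,opt}` is the dual norm of `B(·) v` on `U'`, so the right-hand side of the
identity becomes `sup_{0 ≠ f ∈ U'} f u / ‖f‖`, which is `‖u‖` because `U` embeds isometrically
into its bidual. -/

open Function

theorem Function.Bijective.iSup_ne_zero_comp {M N α : Type*} [Zero M] [Zero N] [SupSet α]
    {T : M → N} (hT : Bijective T) (hT0 : T 0 = 0) (g : N → α) :
    ⨆ x : {x : M // x ≠ 0}, g (T x) = ⨆ y : {y : N // y ≠ 0}, g y := by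
  let T' : {x : M // x ≠ 0} → {y : N // y ≠ 0} :=
    fun x => ⟨T x, fun h => x.2 (hT.1 (h.trans hT0.symm))⟩
  have hT' : Surjective T' := by
    rintro ⟨y, hy⟩
    obtain ⟨x, rfl⟩ := hT.2 y
    exact ⟨⟨x, fun h => hy (h ▸ hT0)⟩, rfl⟩
  exact hT'.iSup_comp fun y => g y

namespace ContinuousLinearMap

variable {E : Type*} [NormedAddCommGroup E] [NormedSpace ℝ E]

theorem iSup_div_norm_eq_opNorm (f : StrongDual ℝ E) :
    ⨆ x : {x : E // x ≠ 0}, f x / ‖(x : E)‖ = ‖f‖ := by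
  set S := ⨆ x : {x : E // x ≠ 0}, f x / ‖(x : E)‖
  have hle : ∀ x : E, f x / ‖x‖ ≤ |f x| / ‖x‖ := fun x =>
    div_le_div_of_nonneg_right (le_abs_self _) (norm_nonneg x)
  have hbdd : BddAbove (Set.range fun x : {x : E // x ≠ 0} => f x / ‖(x : E)‖) :=
    ⟨‖f‖, Set.forall_mem_range.2 fun x => (hle x).trans (f.ratio_le_opNorm x)⟩
  -- `|f x|` is `f x` or `f (-x)`, and `x`, `-x` have the same norm
  have habs : ∀ x : E, x ≠ 0 → |f x| / ‖x‖ ≤ S := by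
    intro x hx
    rcases abs_choice (f x) with h | h
    · rw [h]
      exact le_ciSup hbdd ⟨x, hx⟩
    · rw [h, ← map_neg, ← norm_neg x]
      exact le_ciSup hbdd ⟨-x, neg_ne_zero.2 hx⟩
  have hS : 0 ≤ S := by
    rcases isEmpty_or_nonempty {x : E // x ≠ 0} with hE | ⟨x, hx⟩
    · exact (Real.iSup_of_isEmpty _).ge
    · exact (div_nonneg (abs_nonneg _) (norm_nonneg x)).trans (habs x hx)
  refine le_antisymm (Real.iSup_le (fun x => (hle x).trans (f.ratio_le_opNorm x)) (norm_nonneg f))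
    (f.opNorm_le_bound' hS fun x hx => ?_)
  rw [Real.norm_eq_abs, ← div_le_iff₀ (lt_of_le_of_ne (norm_nonneg x) hx.symm)]
  exact habs x (norm_ne_zero_iff.1 hx)

end ContinuousLinearMap

theorem NormedSpace.norm_eq_iSup_dual_div_norm {E : Type*} [NormedAddCommGroup E]
    [NormedSpace ℝ E] (x : E) :
    ‖x‖ = ⨆ f : {f : StrongDual ℝ E // f ≠ 0}, (f : StrongDual ℝ E) x / ‖(f : StrongDual ℝ E)‖ := by
  rw [← (inclusionInDoubleDualLi ℝ).norm_map x, ← ContinuousLinearMap.iSup_div_norm_eq_opNorm]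
  rfl

namespace ContinuousLinearMap

variable {𝕜 U V : Type*} [RCLike 𝕜] [NormedAddCommGroup U] [NormedSpace 𝕜 U]
  [NormedAddCommGroup V] [NormedSpace 𝕜 V] {B : U →L[𝕜] StrongDual 𝕜 V}

theorem flip_injective_of_surjective (hB : Surjective B) : Injective B.flip := by
  refine (injective_iff_map_eq_zero _).2 fun v hv => SeparatingDual.eq_zero_of_forall_dual_eq_zero
    (R := 𝕜) fun f => ?_
  obtain ⟨u, rfl⟩ := hB f
  exact congrArg (· u) hv

theorem flip_surjective_of_bijective [CompleteSpace U]
    (hV : Surjective (NormedSpace.inclusionInDoubleDual 𝕜 V)) (hB : Bijective B) :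
    Surjective B.flip := by
  intro f
  let e : U ≃L[𝕜] StrongDual 𝕜 V :=
    .ofBijective B (LinearMap.ker_eq_bot.2 hB.1) (LinearMap.range_eq_top.2 hB.2)
  obtain ⟨v, hv⟩ := hV (f.comp (e.symm : StrongDual 𝕜 V →L[𝕜] U))
  exact ⟨v, ext fun u => by simpa [e] using congrArg (· (B u)) hv⟩

theorem flip_bijective [CompleteSpace U]
    (hV : Surjective (NormedSpace.inclusionInDoubleDual 𝕜 V)) (hB : Bijective B) :
    Bijective B.flip :=
  ⟨flip_injective_of_surjective hB.2, flip_surjective_of_bijective hV hB⟩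

end ContinuousLinearMap

theorem statement4_general
    {U V : Type*}
    [NormedAddCommGroup U] [NormedSpace ℝ U] [CompleteSpace U]
    [NormedAddCommGroup V] [NormedSpace ℝ V]
    (hVrefl : Function.Surjective (NormedSpace.inclusionInDoubleDual ℝ V))
    (B : U →L[ℝ] StrongDual ℝ V)
    (hB : Function.Bijective B)
    (Nopt : V → ℝ)
    (hNopt : ∀ v : V, Nopt v = ⨆ u : {u : U // u ≠ 0}, B u v / ‖(u : U)‖) :
    ∀ u : U, ‖u‖ = ⨆ v : {v : V // v ≠ 0}, B u v / Nopt v := by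
  intro u
  have hNopt_eq : ∀ v, Nopt v = ‖B.flip v‖ := fun v =>
    (hNopt v).trans (B.flip v).iSup_div_norm_eq_opNorm
  rw [NormedSpace.norm_eq_iSup_dual_div_norm u,
    ← (B.flip_bijective hVrefl hB).iSup_ne_zero_comp (map_zero _)
    fun f => f u / ‖f‖]
  simp only [hNopt_eq, ContinuousLinearMap.flip_apply]

/-- Let `U, V` be reflexive Banach spaces and `B : U → V'` a bounded
bijective linear operator.  With the optimal test norm
`‖v‖_{V,opt} := sup_{0 ≠ u ∈ U} ⟨Bu, v⟩/‖u‖_U`, one has the duality identity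
`‖u‖_U = sup_{0 ≠ v ∈ V} ⟨Bu, v⟩ / ‖v‖_{V,opt}` for every `u ∈ U`. -/
theorem statement4
    {U V : Type*}
    [NormedAddCommGroup U] [NormedSpace ℝ U] [CompleteSpace U]
    [NormedAddCommGroup V] [NormedSpace ℝ V] [CompleteSpace V]
    (hUrefl : Function.Surjective (NormedSpace.inclusionInDoubleDual ℝ U))
    (hVrefl : Function.Surjective (NormedSpace.inclusionInDoubleDual ℝ V))
    (B : U →L[ℝ] StrongDual ℝ V)
    (hB : Function.Bijective B)
    (Nopt : V → ℝ)
    (hNopt : ∀ v : V, Nopt v = ⨆ u : {u : U // u ≠ 0}, B u v / ‖(u : U)‖) :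
    ∀ u : U, ‖u‖ = ⨆ v : {v : V // v ≠ 0}, B u v / Nopt v :=
  statement4_general hVrefl B hB Nopt hNopt
end

section
/- Let U, V be reflexive Banach spaces and B : U → V' a bounded bijective linear operator. With the optimal trial norm ‖u‖_{U,opt} := sup_{0 ≠ v ∈ V} ⟨Bu, v⟩/‖v‖_V, one has ‖v‖_V = sup_{0 ≠ u ∈ U} ⟨Bu, v⟩ / ‖u‖_{U,opt} for every v ∈ V. -/
/-!
Since `B u` is a functional on `V`, the optimal trial norm is just its dual norm, `‖B u‖`.
As `u` ranges over `U ∖ {0}`, `B u` ranges over all nonzero functionals on `V`, and the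
supremum of `f v / ‖f‖` over those is `‖v‖`: it is at most `‖v‖` by the definition of the
dual norm, and attained by a Hahn–Banach norming functional of `v`.
-/

namespace StrongDual

variable {E : Type*} [NormedAddCommGroup E] [NormedSpace ℝ E]

theorem apply_le_norm_mul_norm (f : StrongDual ℝ E) (v : E) : f v ≤ ‖f‖ * ‖v‖ :=
  (le_abs_self _).trans (f.le_opNorm v)

theorem apply_div_opNorm_le (f : StrongDual ℝ E) (v : E) : f v / ‖f‖ ≤ ‖v‖ :=
  div_le_of_le_mul₀ (norm_nonneg f) (norm_nonneg v) ((f.apply_le_norm_mul_norm v).trans_eq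
    (mul_comm _ _))

theorem apply_div_norm_le_opNorm (f : StrongDual ℝ E) (v : E) : f v / ‖v‖ ≤ ‖f‖ :=
  div_le_of_le_mul₀ (norm_nonneg v) (norm_nonneg f) (f.apply_le_norm_mul_norm v)

theorem iSup_apply_div_norm_eq_opNorm (f : StrongDual ℝ E) :
    ⨆ v : {v : E // v ≠ 0}, f v / ‖(v : E)‖ = ‖f‖ := by
  set S := ⨆ v : {v : E // v ≠ 0}, f v / ‖(v : E)‖
  have hbdd : BddAbove (Set.range fun v : {v : E // v ≠ 0} => f v / ‖(v : E)‖) :=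
    ⟨‖f‖, Set.forall_mem_range.2 fun v => f.apply_div_norm_le_opNorm v⟩
  have hle : ∀ v : E, v ≠ 0 → f v ≤ S * ‖v‖ := fun v hv =>
    (div_le_iff₀ (norm_pos_iff.2 hv)).1 (le_ciSup hbdd ⟨v, hv⟩)
  -- `S` is a supremum of signed quotients; testing it on `v` and `-v` bounds `|f v|`.
  have habs : ∀ v : E, v ≠ 0 → |f v| ≤ S * ‖v‖ := fun v hv => by
    have hneg := hle (-v) (neg_ne_zero.2 hv)
    rw [map_neg, norm_neg] at hneg
    exact abs_le.2 ⟨by linarith, hle v hv⟩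
  have hS : 0 ≤ S := by
    rcases isEmpty_or_nonempty {v : E // v ≠ 0} with _ | ⟨v, hv⟩
    · exact (Real.iSup_of_isEmpty _).ge
    · exact nonneg_of_mul_nonneg_left ((abs_nonneg _).trans (habs v hv)) (norm_pos_iff.2 hv)
  refine le_antisymm (Real.iSup_le (fun v => f.apply_div_norm_le_opNorm v) (norm_nonneg f))
    (f.opNorm_le_bound hS fun v => ?_)
  rcases eq_or_ne v 0 with rfl | hv
  · simp
  · exact habs v hv

end StrongDual

theorem norm_eq_iSup_apply_div_norm {V : Type*} [NormedAddCommGroup V] [NormedSpace ℝ V]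
    {ι : Sort*} (g : ι → StrongDual ℝ V) (hg : ∀ f : StrongDual ℝ V, f ≠ 0 → f ∈ Set.range g)
    (v : V) : ‖v‖ = ⨆ i, g i v / ‖g i‖ := by
  refine le_antisymm ?_ (Real.iSup_le (fun i => (g i).apply_div_opNorm_le v) (norm_nonneg v))
  rcases eq_or_ne v 0 with rfl | hv
  · rw [norm_zero]
    exact Real.iSup_nonneg fun i => by simp
  obtain ⟨f, hf_norm, hf_v⟩ := exists_dual_vector ℝ v (norm_ne_zero_iff.2 hv)
  obtain ⟨i, rfl⟩ := hg f (by rintro rfl; simp at hf_norm)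
  have hbdd : BddAbove (Set.range fun i => g i v / ‖g i‖) :=
    ⟨‖v‖, Set.forall_mem_range.2 fun j => (g j).apply_div_opNorm_le v⟩
  exact le_ciSup_of_le hbdd i (by simp [hf_norm, hf_v])

theorem statement5_general
    {U V : Type*}
    [NormedAddCommGroup U] [NormedSpace ℝ U]
    [NormedAddCommGroup V] [NormedSpace ℝ V]
    (B : U →L[ℝ] StrongDual ℝ V)
    (hB : Function.Bijective B)
    (Nopt : U → ℝ)
    (hNopt : ∀ u : U, Nopt u = ⨆ v : {v : V // v ≠ 0}, B u v / ‖(v : V)‖) :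
    ∀ v : V, ‖v‖ = ⨆ u : {u : U // u ≠ 0}, B u v / Nopt u := by
  have hNopt_eq : ∀ u : U, Nopt u = ‖B u‖ := fun u =>
    (hNopt u).trans (B u).iSup_apply_div_norm_eq_opNorm
  simp only [hNopt_eq]
  refine norm_eq_iSup_apply_div_norm (fun u : {u : U // u ≠ 0} => B u) fun f hf => ?_
  obtain ⟨u, rfl⟩ := hB.2 f
  exact ⟨⟨u, by rintro rfl; exact hf (map_zero B)⟩, rfl⟩

/-- Let `U, V` be reflexive Banach spaces and `B : U → V'` a bounded
bijective linear operator.  With the optimal trial norm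
`‖u‖_{U,opt} := sup_{0 ≠ v ∈ V} ⟨Bu, v⟩/‖v‖_V`, one has
`‖v‖_V = sup_{0 ≠ u ∈ U} ⟨Bu, v⟩ / ‖u‖_{U,opt}` for every `v ∈ V`. -/
theorem statement5
    {U V : Type*}
    [NormedAddCommGroup U] [NormedSpace ℝ U] [CompleteSpace U]
    [NormedAddCommGroup V] [NormedSpace ℝ V] [CompleteSpace V]
    (hUrefl : Function.Surjective (NormedSpace.inclusionInDoubleDual ℝ U))
    (hVrefl : Function.Surjective (NormedSpace.inclusionInDoubleDual ℝ V))
    (B : U →L[ℝ] StrongDual ℝ V)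
    (hB : Function.Bijective B)
    (Nopt : U → ℝ)
    (hNopt : ∀ u : U, Nopt u = ⨆ v : {v : V // v ≠ 0}, B u v / ‖(v : V)‖) :
    ∀ v : V, ‖v‖ = ⨆ u : {u : U // u ≠ 0}, B u v / Nopt u :=
  statement5_general B hB Nopt hNopt
end

section
/- Let U be a reflexive Banach space, V a Hilbert space with inner product ⟨·,·⟩_V, and b : U × V → ℝ a bounded bilinear form with induced bijective operator B : U → V'. Define the trial-to-test operator Θ : U → V by ⟨Θu, v⟩_V = b(u,v) for all v ∈ V. Then for any closed subspace U_h ⊆ U and ℓ ∈ V', the Petrov–Galerkin problem: find u_h ∈ U_h with b(u_h, v_h) = ℓ(v_h) for all v_h ∈ Θ(U_h), has a unique solution, and it satisfies the best approximation property ‖u − u_h‖_{U,opt} = inf_{u'_h ∈ U_h} ‖u − u'_h‖_{U,opt}, where u ∈ U is the unique solution of b(u,v) = ℓ(v) for all v ∈ V and ‖w‖_{U,opt} := sup_{0 ≠ v ∈ V} b(w,v)/‖v‖_V. -/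
/-!
The trial-to-test operator `Θ = R⁻¹ ∘ B`, with `R : V ≃ V'` the Riesz isomorphism, is an
isomorphism of Banach spaces `U ≃L[ℝ] V` (open mapping theorem), and `b w v = ⟪Θ w, v⟫` turns
the optimal norm of `w` into `‖Θ w‖`. The discrete problem says precisely that `Θ u - Θ u_h` is
orthogonal to the closed subspace `Θ(U_h)`, i.e. that `Θ u_h` is the orthogonal projection of
`Θ u` onto `Θ(U_h)`: this gives existence, uniqueness since `Θ` is injective, and the best
approximation property since the projection minimizes the distance to `Θ u`.
-/

open scoped RealInnerProductSpace

open InnerProductSpace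

theorem Submodule.starProjection_eq_iff_inner_sub_eq_zero {E : Type*} [NormedAddCommGroup E]
    [InnerProductSpace ℝ E] {K : Submodule ℝ E} [K.HasOrthogonalProjection] {u v : E}
    (hv : v ∈ K) : K.starProjection u = v ↔ ∀ w ∈ K, ⟪u - v, w⟫ = 0 := by
  refine ⟨?_, K.eq_starProjection_of_mem_of_inner_eq_zero hv⟩
  rintro rfl
  exact K.starProjection_inner_eq_zero u

theorem iSup_inner_div_norm_eq_norm {V : Type*} [NormedAddCommGroup V] [InnerProductSpace ℝ V]
    (x : V) : ⨆ v : {v : V // v ≠ 0}, ⟪x, v⟫ / ‖(v : V)‖ = ‖x‖ := by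
  rcases eq_or_ne x 0 with rfl | hx
  · simp [Real.iSup_const_zero]
  have hle : ∀ v : {v : V // v ≠ 0}, ⟪x, v⟫ / ‖(v : V)‖ ≤ ‖x‖ := fun v =>
    div_le_of_le_mul₀ (norm_nonneg _) (norm_nonneg _) (real_inner_le_norm _ _)
  have : Nonempty {v : V // v ≠ 0} := ⟨⟨x, hx⟩⟩
  refine le_antisymm (ciSup_le hle) ?_
  have hxx : ⟪x, x⟫ / ‖x‖ = ‖x‖ := by
    rw [real_inner_self_eq_norm_mul_norm, mul_self_div_self]
  exact hxx ▸ le_ciSup ⟨‖x‖, Set.forall_mem_range.2 hle⟩ ⟨x, hx⟩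

section TrialToTest

variable {U V : Type*} [NormedAddCommGroup U] [NormedSpace ℝ U] [CompleteSpace U]
    [NormedAddCommGroup V] [InnerProductSpace ℝ V] [CompleteSpace V]

noncomputable def trialToTest (b : U →L[ℝ] V →L[ℝ] ℝ) (hb : Function.Bijective fun u : U => b u) :
    U ≃L[ℝ] V :=
  (ContinuousLinearEquiv.ofBijective b (LinearMap.ker_eq_bot.2 hb.injective)
    (LinearMap.range_eq_top.2 hb.surjective)).trans (toDual ℝ V).symm.toContinuousLinearEquiv

variable {b : U →L[ℝ] V →L[ℝ] ℝ} {hb : Function.Bijective fun u : U => b u}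

theorem inner_trialToTest (u : U) (v : V) : ⟪trialToTest b hb u, v⟫ = b u v :=
  toDual_symm_apply

theorem eq_trialToTest {Θ : U → V} (hΘ : ∀ u v, ⟪Θ u, v⟫ = b u v) : Θ = trialToTest b hb :=
  funext fun u => ext_inner_right ℝ fun v => by rw [hΘ, inner_trialToTest]

theorem iSup_div_norm_eq_norm_trialToTest (w : U) :
    ⨆ v : {v : V // v ≠ 0}, b w v / ‖(v : V)‖ = ‖trialToTest b hb w‖ := by
  simp only [← inner_trialToTest (hb := hb), iSup_inner_div_norm_eq_norm]

theorem petrovGalerkin_iff_starProjection_eq {Uh : Submodule ℝ U}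
    [(Uh.map (trialToTest b hb : U →ₗ[ℝ] V)).HasOrthogonalProjection] {u uh : U} (huh : uh ∈ Uh) :
    (∀ wh ∈ Uh, b uh (trialToTest b hb wh) = b u (trialToTest b hb wh)) ↔
      (Uh.map (trialToTest b hb : U →ₗ[ℝ] V)).starProjection (trialToTest b hb u) =
        trialToTest b hb uh := by
  rw [Submodule.starProjection_eq_iff_inner_sub_eq_zero (v := trialToTest b hb uh)
      (Submodule.mem_map_of_mem huh)]
  simp only [Submodule.mem_map, forall_exists_index, and_imp,
    forall_apply_eq_imp_iff₂, inner_sub_left, inner_trialToTest, sub_eq_zero]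
  exact forall₂_congr fun _ _ => eq_comm

end TrialToTest

theorem statement7_general
    {U V : Type*}
    [NormedAddCommGroup U] [NormedSpace ℝ U] [CompleteSpace U]
    [NormedAddCommGroup V] [InnerProductSpace ℝ V] [CompleteSpace V]
    (b : U →L[ℝ] V →L[ℝ] ℝ)
    (hb : Function.Bijective fun u : U => b u)
    -- the trial-to-test operator, defined by the Riesz representation
    (Θ : U → V) (hΘ : ∀ (u : U) (v : V), ⟪Θ u, v⟫ = b u v)
    -- a closed subspace of `U`
    (Uh : Submodule ℝ U) (hUh : IsClosed (Uh : Set U))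
    (ℓ : V →L[ℝ] ℝ)
    -- `u` is the unique exact solution
    (u : U) (hu : ∀ v : V, b u v = ℓ v) :
    -- unique solvability of the discrete Petrov–Galerkin problem
    (∃! uh : U, uh ∈ Uh ∧ ∀ wh ∈ Uh, b uh (Θ wh) = ℓ (Θ wh)) ∧
    -- best approximation property in the optimal trial norm
    (∀ uh : U, uh ∈ Uh → (∀ wh ∈ Uh, b uh (Θ wh) = ℓ (Θ wh)) →
      (⨆ v : {v : V // v ≠ 0}, b (u - uh) v / ‖(v : V)‖)
        = ⨅ wh : Uh, ⨆ v : {v : V // v ≠ 0}, b (u - (wh : U)) v / ‖(v : V)‖) := by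
  obtain rfl := eq_trialToTest (hb := hb) hΘ
  obtain rfl : ℓ = b u := (ContinuousLinearMap.ext hu).symm
  set E := trialToTest b hb
  set K := Uh.map (E : U →ₗ[ℝ] V)
  have hK : IsClosed (K : Set V) := by
    rw [Submodule.map_coe]
    exact E.isClosed_image.2 hUh
  have : CompleteSpace K := hK.completeSpace_coe
  obtain ⟨u₀, hu₀, hEu₀⟩ := Submodule.mem_map.1 (K.starProjection_apply_mem (E u))
  refine ⟨⟨u₀, ⟨hu₀, (petrovGalerkin_iff_starProjection_eq hu₀).2 hEu₀.symm⟩, ?_⟩, ?_⟩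
  · rintro uh ⟨huh, hsol⟩
    exact E.injective (((petrovGalerkin_iff_starProjection_eq huh).1 hsol).symm.trans hEu₀.symm)
  · intro uh huh hsol
    simp only [iSup_div_norm_eq_norm_trialToTest (hb := hb)]
    simp only [map_sub]
    rw [← (petrovGalerkin_iff_starProjection_eq huh).1 hsol, Submodule.starProjection_minimal,
      ← (E.toLinearEquiv.submoduleMap Uh).surjective.iInf_comp]
    rfl

/-- DPG method: unique solvability of the Petrov–Galerkin problem
with optimal test functions on a closed subspace `U_h ⊆ U`, and the best
approximation property in the optimal trial norm
`‖w‖_{U,opt} := sup_{0 ≠ v ∈ V} b(w,v)/‖v‖_V`. -/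
theorem statement7
    {U V : Type*}
    [NormedAddCommGroup U] [NormedSpace ℝ U] [CompleteSpace U]
    [NormedAddCommGroup V] [InnerProductSpace ℝ V] [CompleteSpace V]
    (hUrefl : Function.Surjective (NormedSpace.inclusionInDoubleDual ℝ U))
    (b : U →L[ℝ] V →L[ℝ] ℝ)
    (hb : Function.Bijective fun u : U => b u)
    -- the trial-to-test operator, defined by the Riesz representation
    (Θ : U → V) (hΘ : ∀ (u : U) (v : V), ⟪Θ u, v⟫ = b u v)
    -- a closed subspace of `U`
    (Uh : Submodule ℝ U) (hUh : IsClosed (Uh : Set U))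
    (ℓ : V →L[ℝ] ℝ)
    -- `u` is the unique exact solution
    (u : U) (hu : ∀ v : V, b u v = ℓ v) :
    -- unique solvability of the discrete Petrov–Galerkin problem
    (∃! uh : U, uh ∈ Uh ∧ ∀ wh ∈ Uh, b uh (Θ wh) = ℓ (Θ wh)) ∧
    -- best approximation property in the optimal trial norm
    (∀ uh : U, uh ∈ Uh → (∀ wh ∈ Uh, b uh (Θ wh) = ℓ (Θ wh)) →
      (⨆ v : {v : V // v ≠ 0}, b (u - uh) v / ‖(v : V)‖)
        = ⨅ wh : Uh, ⨆ v : {v : V // v ≠ 0}, b (u - (wh : U)) v / ‖(v : V)‖) :=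
  statement7_general b hb Θ hΘ Uh hUh ℓ u hu
end

section
/- Let X be a reflexive Banach space and Y a normed space, and let b : X × Y → ℝ be bilinear with |b(x,y)| ≤ M‖x‖‖y‖. Define ‖x‖_opt := sup_{0≠y} b(x,y)/‖y‖. If there is β > 0 with ‖x‖_opt ≥ β‖x‖ for all x ∈ X, then any two minimizers over a closed convex subset K ⊆ X of the functional x ↦ ‖x₀ − x‖_opt (for fixed x₀) have distance at most (2/β)·inf_{x∈K}‖x₀ − x‖_opt ≤ (2M/β)·inf_{x∈K}‖x₀ − x‖; and if ‖·‖_opt comes from a bilinear form on a Hilbert test space via the trial-to-test operator, ‖x‖_opt = ‖Θx‖_V, then the minimizer over a closed subspace K is unique. -/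
open scoped RealInnerProductSpace

/-!
`‖x‖_opt` is the operator norm of `b x`, hence a seminorm bounded by `M‖x‖`. By the inf-sup
condition, `β‖x₁ - x₂‖ ≤ ‖x₁ - x₂‖_opt ≤ ‖x₀ - x₁‖_opt + ‖x₀ - x₂‖_opt`, which is twice the
minimum. In the Hilbertian case `‖·‖_opt = ‖Θ ·‖` with `Θ` linear and (by inf-sup) injective, so
two distinct minimizers would have images `Θ (x₀ - xᵢ)` of equal norm whose midpoint is strictly
shorter, by strict convexity of `V`.
-/

open Function Set

theorem ContinuousLinearMap.iSup_apply_div_norm_eq_norm {Y : Type*} [NormedAddCommGroup Y]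
    [NormedSpace ℝ Y] (f : Y →L[ℝ] ℝ) : ⨆ y : {y : Y // y ≠ 0}, f y / ‖(y : Y)‖ = ‖f‖ := by
  rcases isEmpty_or_nonempty {y : Y // y ≠ 0} with hY | hY
  · have hf : f = 0 := ext fun y => by
      by_contra hy
      exact hY.false ⟨y, fun h => hy (by simp [h])⟩
    simp [hf]
  have hle (y : {y : Y // y ≠ 0}) : f y / ‖(y : Y)‖ ≤ ‖f‖ :=
    div_le_of_le_mul₀ (norm_nonneg _) (norm_nonneg _) ((le_abs_self _).trans (f.le_opNorm y))
  set S := ⨆ y : {y : Y // y ≠ 0}, f y / ‖(y : Y)‖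
  have hS (y : Y) : f y ≤ S * ‖y‖ := by
    rcases eq_or_ne y 0 with rfl | hy
    · simp
    · exact (div_le_iff₀ (norm_pos_iff.2 hy)).1 (le_ciSup ⟨‖f‖, forall_mem_range.2 hle⟩ ⟨y, hy⟩)
  have habs (y : Y) : ‖f y‖ ≤ S * ‖y‖ := by
    rw [Real.norm_eq_abs, abs_le]
    refine ⟨?_, hS y⟩
    simpa [neg_le] using hS (-y)
  obtain ⟨y₀, hy₀⟩ := hY.some
  have hS₀ : 0 ≤ S :=
    nonneg_of_mul_nonneg_left ((norm_nonneg _).trans (habs y₀)) (norm_pos_iff.2 hy₀)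
  exact le_antisymm (ciSup_le hle) (f.opNorm_le_bound hS₀ habs)

theorem ContinuousLinearMap.norm_apply_le_of_abs_apply_le {X Y : Type*}
    [SeminormedAddCommGroup X] [NormedSpace ℝ X] [SeminormedAddCommGroup Y] [NormedSpace ℝ Y]
    (b : X →L[ℝ] Y →L[ℝ] ℝ) {M : ℝ} (hM : ∀ x y, |b x y| ≤ M * ‖x‖ * ‖y‖) {x : X}
    (hx : b x ≠ 0) : ‖b x‖ ≤ M * ‖x‖ := by
  obtain ⟨y, hy⟩ : ∃ y, b x y ≠ 0 := by
    by_contra! h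
    exact hx (ContinuousLinearMap.ext h)
  have hMx : 0 ≤ M * ‖x‖ := nonneg_of_mul_nonneg_left ((abs_nonneg _).trans (hM x y))
    ((norm_nonneg y).lt_of_ne fun h => hy (abs_nonpos_iff.1 ((hM x y).trans_eq (by simp [← h]))))
  exact (b x).opNorm_le_bound hMx fun y => hM x y

theorem Real.iInf_le_mul_iInf {ι : Type*} [Nonempty ι] {f g : ι → ℝ} {M : ℝ}
    (hf : ∀ i, 0 ≤ f i) (hg : ∀ i, 0 ≤ g i) (hfg : ∀ i, f i ≤ M * g i) :
    ⨅ i, f i ≤ M * ⨅ i, g i := by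
  rcases le_or_gt 0 M with hM | hM
  · rw [Real.mul_iInf_of_nonneg hM]
    exact ciInf_mono ⟨0, forall_mem_range.2 hf⟩ hfg
  · have hg₀ (i : ι) : g i = 0 :=
      le_antisymm (nonpos_of_mul_nonneg_right ((hf i).trans (hfg i)) hM) (hg i)
    obtain ⟨i⟩ := ‹Nonempty ι›
    calc ⨅ i, f i ≤ f i := ciInf_le ⟨0, forall_mem_range.2 hf⟩ i
      _ ≤ M * g i := hfg i
      _ = M * ⨅ i, g i := by simp [hg₀]

theorem norm_sub_le_of_isMinOn {X : Type*} [SeminormedAddCommGroup X] [Module ℝ X]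
    (p : Seminorm ℝ X) {β : ℝ} (hβ : 0 < β) (hp : ∀ x, β * ‖x‖ ≤ p x) {K : Set X}
    {x₀ x₁ x₂ : X} (hx₁ : x₁ ∈ K) (h₁ : IsMinOn (fun x => p (x₀ - x)) K x₁)
    (h₂ : IsMinOn (fun x => p (x₀ - x)) K x₂) :
    ‖x₁ - x₂‖ ≤ 2 / β * ⨅ x : K, p (x₀ - x) := by
  rw [h₁.iInf_eq hx₁, div_mul_eq_mul_div, le_div_iff₀ hβ]
  have h₂₁ : p (x₀ - x₂) ≤ p (x₀ - x₁) := isMinOn_iff.1 h₂ _ hx₁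
  calc ‖x₁ - x₂‖ * β ≤ p ((x₀ - x₂) - (x₀ - x₁)) := by
        rw [sub_sub_sub_cancel_left, mul_comm]; exact hp _
    _ ≤ p (x₀ - x₂) + p (x₀ - x₁) := map_sub_le_add p _ _
    _ ≤ 2 * p (x₀ - x₁) := by linarith

theorem eq_of_isMinOn_norm_map_sub {X V : Type*} [AddCommGroup X] [Module ℝ X]
    [NormedAddCommGroup V] [NormedSpace ℝ V] [StrictConvexSpace ℝ V] {T : X →ₗ[ℝ] V}
    (hT : Injective T) {K : Set X} (hK : Convex ℝ K) {x₀ x₁ x₂ : X} (hx₁ : x₁ ∈ K)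
    (hx₂ : x₂ ∈ K) (h₁ : IsMinOn (fun x => ‖T (x₀ - x)‖) K x₁)
    (h₂ : IsMinOn (fun x => ‖T (x₀ - x)‖) K x₂) : x₁ = x₂ := by
  by_contra hne
  have hv : T (x₀ - x₁) ≠ T (x₀ - x₂) := hT.ne fun h => hne (sub_right_injective h)
  have hnorm : ‖T (x₀ - x₁)‖ = ‖T (x₀ - x₂)‖ :=
    le_antisymm (isMinOn_iff.1 h₁ _ hx₂) (isMinOn_iff.1 h₂ _ hx₁)
  have hmid : (1 / 2 : ℝ) • x₁ + (1 / 2 : ℝ) • x₂ ∈ K :=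
    hK hx₁ hx₂ (by norm_num) (by norm_num) (by norm_num)
  have hTmid : T (x₀ - ((1 / 2 : ℝ) • x₁ + (1 / 2 : ℝ) • x₂))
      = (1 / 2 : ℝ) • (T (x₀ - x₁) + T (x₀ - x₂)) := by
    rw [← map_add, ← map_smul]; congr 1; module
  have hle := isMinOn_iff.1 h₁ _ hmid
  rw [hTmid] at hle
  exact hle.not_gt ((norm_midpoint_lt_iff hnorm).2 hv)

theorem isLinearMap_of_forall_inner_eq {X V : Type*} [AddCommGroup X] [Module ℝ X]
    [NormedAddCommGroup V] [InnerProductSpace ℝ V] (b : X →ₗ[ℝ] V →L[ℝ] ℝ) {Θ : X → V}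
    (hΘ : ∀ x v, ⟪Θ x, v⟫ = b x v) : IsLinearMap ℝ Θ where
  map_add x y := ext_inner_right ℝ fun v => by simp only [inner_add_left, hΘ, map_add, add_apply]
  map_smul c x := ext_inner_right ℝ fun v => by
    simp only [real_inner_smul_left, hΘ, map_smul, smul_apply, smul_eq_mul]

theorem statement19_general
    {X Y V : Type*}
    [NormedAddCommGroup X] [NormedSpace ℝ X]
    [NormedAddCommGroup Y] [NormedSpace ℝ Y]
    [NormedAddCommGroup V] [InnerProductSpace ℝ V]
    (b : X →L[ℝ] Y →L[ℝ] ℝ)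
    (M : ℝ) (hM : ∀ (x : X) (y : Y), |b x y| ≤ M * ‖x‖ * ‖y‖)
    (Nopt : X → ℝ)
    (hNopt : ∀ x : X, Nopt x = ⨆ y : {y : Y // y ≠ 0}, b x y / ‖(y : Y)‖)
    (β : ℝ) (hβ : 0 < β)
    (hinfsup : ∀ x : X, β * ‖x‖ ≤ Nopt x) :
    -- distance between two minimizers over a closed convex set
    (∀ (K : Set X), Convex ℝ K → IsClosed K → ∀ x₀ x₁ x₂ : X,
      x₁ ∈ K → x₂ ∈ K →
      (∀ x ∈ K, Nopt (x₀ - x₁) ≤ Nopt (x₀ - x)) →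
      (∀ x ∈ K, Nopt (x₀ - x₂) ≤ Nopt (x₀ - x)) →
      ‖x₁ - x₂‖ ≤ (2 / β) * ⨅ x : K, Nopt (x₀ - (x : X)) ∧
      (2 / β) * ⨅ x : K, Nopt (x₀ - (x : X)) ≤ (2 * M / β) * ⨅ x : K, ‖x₀ - (x : X)‖) ∧
    -- uniqueness of the minimizer over a closed subspace in the Hilbertian case
    (∀ (b' : X →L[ℝ] V →L[ℝ] ℝ) (Θ : X → V),
      (∀ (x : X) (v : V), ⟪Θ x, v⟫ = b' x v) →
      (∀ x : X, Nopt x = ‖Θ x‖) →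
      ∀ (K : Submodule ℝ X), IsClosed (K : Set X) → ∀ x₀ x₁ x₂ : X,
        x₁ ∈ K → x₂ ∈ K →
        (∀ x ∈ K, Nopt (x₀ - x₁) ≤ Nopt (x₀ - x)) →
        (∀ x ∈ K, Nopt (x₀ - x₂) ≤ Nopt (x₀ - x)) →
        x₁ = x₂) := by
  have hN_eq_zero {x : X} (hx : Nopt x = 0) : x = 0 :=
    norm_le_zero_iff.1 (nonpos_of_mul_nonpos_right (hx ▸ hinfsup x) hβ)
  refine ⟨fun K _ _ x₀ x₁ x₂ hx₁ _ h₁ h₂ => ?_, fun b' Θ hΘ hNΘ K _ x₀ x₁ x₂ hx₁ hx₂ h₁ h₂ => ?_⟩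
  · have hN : Nopt = (normSeminorm ℝ (Y →L[ℝ] ℝ)).comp b.toLinearMap :=
      funext fun x => (hNopt x).trans (b x).iSup_apply_div_norm_eq_norm
    subst hN
    have hbound (x : X) : ‖b x‖ ≤ M * ‖x‖ := by
      rcases eq_or_ne (b x) 0 with hx | hx
      · simp [hN_eq_zero (by simp [hx] : ‖b x‖ = 0)]
      · exact b.norm_apply_le_of_abs_apply_le hM hx
    have : Nonempty K := ⟨⟨x₁, hx₁⟩⟩
    refine ⟨norm_sub_le_of_isMinOn _ hβ hinfsup hx₁ (isMinOn_iff.2 h₁) (isMinOn_iff.2 h₂), ?_⟩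
    calc 2 / β * ⨅ x : K, ‖b (x₀ - x)‖ ≤ 2 / β * (M * ⨅ x : K, ‖x₀ - x‖) := by
          gcongr
          exact Real.iInf_le_mul_iInf (fun _ => norm_nonneg _) (fun _ => norm_nonneg _)
            fun _ => hbound _
      _ = 2 * M / β * ⨅ x : K, ‖x₀ - x‖ := by ring
  · let T : X →ₗ[ℝ] V := IsLinearMap.mk' Θ (isLinearMap_of_forall_inner_eq b' hΘ)
    have hT : Injective T :=
      (injective_iff_map_eq_zero T).2 fun x hx => hN_eq_zero ((hNΘ x).trans (norm_eq_zero.2 hx))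
    simp only [hNΘ] at h₁ h₂
    exact eq_of_isMinOn_norm_map_sub hT K.convex hx₁ hx₂ (isMinOn_iff.2 h₁) (isMinOn_iff.2 h₂)

/-- Let `X` be a reflexive Banach space, `Y` a normed space and
`b : X × Y → ℝ` bilinear with `|b(x,y)| ≤ M‖x‖‖y‖`.  With
`‖x‖_opt := sup_{0≠y} b(x,y)/‖y‖` and inf-sup constant `β > 0`
(`‖x‖_opt ≥ β‖x‖`), any two minimizers over a closed convex `K ⊆ X` of
`x ↦ ‖x₀ − x‖_opt` have distance at most `(2/β)·inf_{x∈K}‖x₀ − x‖_opt`, which is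
`≤ (2M/β)·inf_{x∈K}‖x₀ − x‖`.  Moreover, if `‖·‖_opt` comes from a bounded
bilinear form on a Hilbert test space `V` via the trial-to-test operator
(`‖x‖_opt = ‖Θx‖_V`, `⟪Θx, v⟫_V = b(x,v)`), then the minimizer over a closed
subspace is unique. -/
theorem statement19
    {X Y V : Type*}
    [NormedAddCommGroup X] [NormedSpace ℝ X] [CompleteSpace X]
    [NormedAddCommGroup Y] [NormedSpace ℝ Y]
    [NormedAddCommGroup V] [InnerProductSpace ℝ V] [CompleteSpace V]
    (hXrefl : Function.Surjective (NormedSpace.inclusionInDoubleDual ℝ X))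
    (b : X →L[ℝ] Y →L[ℝ] ℝ)
    (M : ℝ) (hM : ∀ (x : X) (y : Y), |b x y| ≤ M * ‖x‖ * ‖y‖)
    (Nopt : X → ℝ)
    (hNopt : ∀ x : X, Nopt x = ⨆ y : {y : Y // y ≠ 0}, b x y / ‖(y : Y)‖)
    (β : ℝ) (hβ : 0 < β)
    (hinfsup : ∀ x : X, β * ‖x‖ ≤ Nopt x) :
    -- distance between two minimizers over a closed convex set
    (∀ (K : Set X), Convex ℝ K → IsClosed K → ∀ x₀ x₁ x₂ : X,
      x₁ ∈ K → x₂ ∈ K →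
      (∀ x ∈ K, Nopt (x₀ - x₁) ≤ Nopt (x₀ - x)) →
      (∀ x ∈ K, Nopt (x₀ - x₂) ≤ Nopt (x₀ - x)) →
      ‖x₁ - x₂‖ ≤ (2 / β) * ⨅ x : K, Nopt (x₀ - (x : X)) ∧
      (2 / β) * ⨅ x : K, Nopt (x₀ - (x : X)) ≤ (2 * M / β) * ⨅ x : K, ‖x₀ - (x : X)‖) ∧
    -- uniqueness of the minimizer over a closed subspace in the Hilbertian case
    (∀ (b' : X →L[ℝ] V →L[ℝ] ℝ) (Θ : X → V),
      (∀ (x : X) (v : V), ⟪Θ x, v⟫ = b' x v) →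
      (∀ x : X, Nopt x = ‖Θ x‖) →
      ∀ (K : Submodule ℝ X), IsClosed (K : Set X) → ∀ x₀ x₁ x₂ : X,
        x₁ ∈ K → x₂ ∈ K →
        (∀ x ∈ K, Nopt (x₀ - x₁) ≤ Nopt (x₀ - x)) →
        (∀ x ∈ K, Nopt (x₀ - x₂) ≤ Nopt (x₀ - x)) →
        x₁ = x₂) :=
  statement19_general b M hM Nopt hNopt β hβ hinfsup
end
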